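/- Let r ∈ ℕ_0 and γ = (γ_0,…,γ_r) ∈ ℝ^{r+1}. The function P_γ is bounded on some interval (0,d) with d ∈ (0,1) if and only if either γ = 0, or, denoting by j_0 the least index with γ_{j_0} ≠ 0, one has (j_0 = 0 and γ_0 > 0) or (j_0 ≥ 1 and γ_{j_0} < 0). -/

import Mathlib

open Real Filter Topology

/-- Iterated logarithms: `ell 0 z = z`, `ell 1 z = -log z`,
`ell (j+1) z = log (ell j z)` for `j ≥ 1`. -/
noncomputable def ell : ℕ → ℝ → ℝ
  | 0, z => z
  | 1, z => -Real.log z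
  | (n+2), z => Real.log (ell (n+1) z)

/-- The scale monomial `P_γ(z) = ∏_{j=0}^r ℓ_j(z)^{γ_j}` (real-exponent powers). -/
noncomputable def Pgamma (r : ℕ) (γ : ℕ → ℝ) (z : ℝ) : ℝ :=
  ∏ j ∈ Finset.range (r+1), (ell j z) ^ (γ j)

/-!
Near `0⁺` all `ℓ_j` are positive, so `P_γ = exp L_γ` with `L_γ = ∑_j γ_j log ℓ_j`. Since
`log ℓ_{j+1} = log |log ℓ_j|` and `|log ℓ_j| → ∞`, each `log ℓ_j` is negligible against `log ℓ_i`
for `i < j`; hence `L_γ` is asymptotic to its leading term `γ_{j₀} log ℓ_{j₀}`. As `log ℓ_0 → -∞`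
while `log ℓ_j → +∞` for `j ≥ 1`, this term tends to `-∞` (and `P_γ → 0`) exactly under the sign
condition, and to `+∞` (and `P_γ → ∞`) otherwise.
-/

open Asymptotics

theorem Asymptotics.isEquivalent_sum_leading {α 𝕜 : Type*} [NormedField 𝕜] {l : Filter α}
    {f : ℕ → α → 𝕜} {c : ℕ → 𝕜} {s : Finset ℕ} {j₀ : ℕ} (hj₀ : j₀ ∈ s) (hc : c j₀ ≠ 0)
    (hlow : ∀ i < j₀, c i = 0) (hf : ∀ j, j₀ < j → f j =o[l] f j₀) :
    (fun x => ∑ j ∈ s, c j * f j x) ~[l] fun x => c j₀ * f j₀ x := by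
  classical
  have htail : (fun x => ∑ j ∈ s.erase j₀, c j * f j x) =o[l] fun x => c j₀ * f j₀ x := by
    refine IsLittleO.fun_sum fun j hj => ?_
    rcases lt_or_gt_of_ne (Finset.ne_of_mem_erase hj) with hlt | hgt
    · simpa only [hlow j hlt, zero_mul] using isLittleO_zero (E' := 𝕜) _ l
    · exact ((hf j hgt).const_mul_left (c j)).const_mul_right hc
  exact (IsEquivalent.refl.add_isLittleO htail).congr_left
    (.of_forall fun x => Finset.add_sum_erase s (fun j => c j * f j x) hj₀)

lemma tendsto_ell_succ (k : ℕ) : Tendsto (ell (k + 1)) (𝓝[>] 0) atTop := by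
  induction k with
  | zero => exact tendsto_neg_atBot_atTop.comp tendsto_log_nhdsGT_zero
  | succ k ih => exact tendsto_log_atTop.comp ih

lemma eventually_ell_pos (j : ℕ) : ∀ᶠ z in 𝓝[>] 0, 0 < ell j z := by
  cases j with
  | zero => exact self_mem_nhdsWithin
  | succ k => exact (tendsto_ell_succ k).eventually_gt_atTop 0

lemma tendsto_log_ell_zero : Tendsto (fun z => log (ell 0 z)) (𝓝[>] 0) atBot :=
  tendsto_log_nhdsGT_zero

lemma tendsto_log_ell_succ (k : ℕ) : Tendsto (fun z => log (ell (k + 1) z)) (𝓝[>] 0) atTop :=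
  tendsto_ell_succ (k + 1)

lemma log_ell_succ (k : ℕ) (z : ℝ) : log (ell (k + 1) z) = log (log (ell k z)) := by
  cases k with
  | zero => exact log_neg_eq_log _
  | succ k => rfl

lemma tendsto_abs_log_ell (k : ℕ) : Tendsto (fun z => |log (ell k z)|) (𝓝[>] 0) atTop := by
  cases k with
  | zero => exact tendsto_abs_atBot_atTop.comp tendsto_log_ell_zero
  | succ k => exact tendsto_abs_atTop_atTop.comp (tendsto_log_ell_succ k)

lemma isLittleO_log_ell_succ (k : ℕ) :
    (fun z => log (ell (k + 1) z)) =o[𝓝[>] 0] fun z => log (ell k z) := by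
  simp_rw [log_ell_succ, ← log_abs (log (ell k _))]
  exact isLittleO_abs_right.mp (isLittleO_log_id_atTop.comp_tendsto (tendsto_abs_log_ell k))

lemma isLittleO_log_ell_of_lt {k m : ℕ} (h : k < m) :
    (fun z => log (ell m z)) =o[𝓝[>] 0] fun z => log (ell k z) := by
  induction m, h using Nat.le_induction with
  | base => exact isLittleO_log_ell_succ k
  | succ m _ ih => exact (isLittleO_log_ell_succ m).trans ih

noncomputable def logPgamma (r : ℕ) (γ : ℕ → ℝ) (z : ℝ) : ℝ :=
  ∑ j ∈ Finset.range (r + 1), γ j * log (ell j z)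

lemma Pgamma_eventuallyEq_exp_logPgamma (r : ℕ) (γ : ℕ → ℝ) :
    Pgamma r γ =ᶠ[𝓝[>] 0] fun z => exp (logPgamma r γ z) := by
  filter_upwards [(Finset.eventually_all _).2 fun j _ => eventually_ell_pos j] with z hz
  rw [Pgamma, logPgamma, exp_sum]
  exact Finset.prod_congr rfl fun j hj => by rw [rpow_def_of_pos (hz j hj), mul_comm]

lemma logPgamma_isEquivalent {r j₀ : ℕ} {γ : ℕ → ℝ} (hj₀ : j₀ ≤ r) (hγ : γ j₀ ≠ 0)
    (hlow : ∀ i < j₀, γ i = 0) :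
    logPgamma r γ ~[𝓝[>] 0] fun z => γ j₀ * log (ell j₀ z) :=
  isEquivalent_sum_leading (Finset.mem_range_succ_iff.2 hj₀) hγ hlow
    fun _ hj => isLittleO_log_ell_of_lt hj

lemma isBoundedUnder_abs_Pgamma_of_tendsto_atBot {r : ℕ} {γ : ℕ → ℝ}
    (h : Tendsto (logPgamma r γ) (𝓝[>] 0) atBot) :
    IsBoundedUnder (· ≤ ·) (𝓝[>] 0) fun z => |Pgamma r γ z| := by
  have hP : Tendsto (Pgamma r γ) (𝓝[>] 0) (𝓝 0) :=
    (tendsto_exp_atBot.comp h).congr' (Pgamma_eventuallyEq_exp_logPgamma r γ).symm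
  simpa using hP.abs.isBoundedUnder_le

lemma not_isBoundedUnder_abs_Pgamma_of_tendsto_atTop {r : ℕ} {γ : ℕ → ℝ}
    (h : Tendsto (logPgamma r γ) (𝓝[>] 0) atTop) :
    ¬IsBoundedUnder (· ≤ ·) (𝓝[>] 0) fun z => |Pgamma r γ z| := by
  have hP : Tendsto (Pgamma r γ) (𝓝[>] 0) atTop :=
    (tendsto_exp_atTop.comp h).congr' (Pgamma_eventuallyEq_exp_logPgamma r γ).symm
  exact not_isBoundedUnder_of_tendsto_atTop (tendsto_abs_atTop_atTop.comp hP)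

lemma isBoundedUnder_abs_Pgamma_iff_of_leading {r j₀ : ℕ} {γ : ℕ → ℝ} (hj₀ : j₀ ≤ r)
    (hγ : γ j₀ ≠ 0) (hlow : ∀ i < j₀, γ i = 0) :
    IsBoundedUnder (· ≤ ·) (𝓝[>] 0) (fun z => |Pgamma r γ z|) ↔
      (j₀ = 0 ∧ 0 < γ 0) ∨ (1 ≤ j₀ ∧ γ j₀ < 0) := by
  have hequiv := (logPgamma_isEquivalent hj₀ hγ hlow).symm
  rcases j₀ with _ | k <;> rcases hγ.lt_or_gt with hneg | hpos
  · simpa [hneg.not_gt] using not_isBoundedUnder_abs_Pgamma_of_tendsto_atTop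
      (hequiv.tendsto_atTop (tendsto_log_ell_zero.const_mul_atBot_of_neg hneg))
  · simpa [hpos] using isBoundedUnder_abs_Pgamma_of_tendsto_atBot
      (hequiv.tendsto_atBot (tendsto_log_ell_zero.const_mul_atBot hpos))
  · simpa [hneg] using isBoundedUnder_abs_Pgamma_of_tendsto_atBot
      (hequiv.tendsto_atBot ((tendsto_log_ell_succ k).const_mul_atTop_of_neg hneg))
  · simpa [hpos.not_gt] using not_isBoundedUnder_abs_Pgamma_of_tendsto_atTop
      (hequiv.tendsto_atTop ((tendsto_log_ell_succ k).const_mul_atTop hpos))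

lemma exists_Ioo_abs_le_iff_isBoundedUnder (f : ℝ → ℝ) :
    (∃ d ∈ Set.Ioo (0 : ℝ) 1, ∃ M : ℝ, ∀ z ∈ Set.Ioo (0 : ℝ) d, |f z| ≤ M) ↔
      IsBoundedUnder (· ≤ ·) (𝓝[>] 0) fun z => |f z| := by
  constructor
  · rintro ⟨d, hd, M, hM⟩
    exact isBoundedUnder_of_eventually_le (eventually_of_mem (Ioo_mem_nhdsGT hd.1) hM)
  · rintro ⟨M, hM⟩
    obtain ⟨u, hu, hsub⟩ := mem_nhdsGT_iff_exists_Ioo_subset.1 hM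
    refine ⟨min u (1 / 2), ⟨lt_min hu (by norm_num), by linarith [min_le_right u (1 / 2)]⟩, M,
      fun z hz => hsub ⟨hz.1, hz.2.trans_le (min_le_left _ _)⟩⟩

lemma Pgamma_of_forall_eq_zero {r : ℕ} {γ : ℕ → ℝ} (h : ∀ j ≤ r, γ j = 0) (z : ℝ) :
    Pgamma r γ z = 1 :=
  Finset.prod_eq_one fun j hj => by rw [h j (Finset.mem_range_succ_iff.1 hj), rpow_zero]

/-- `P_γ` is bounded on some interval `(0,d)` with `d ∈ (0,1)` if and only if
either `γ = 0` or, denoting by `j₀` the least index with `γ_{j₀} ≠ 0`, one has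
`(j₀ = 0 ∧ γ_0 > 0)` or `(j₀ ≥ 1 ∧ γ_{j₀} < 0)`. -/
theorem Pgamma_bounded_iff (r : ℕ) (γ : ℕ → ℝ) :
    (∃ d ∈ Set.Ioo (0:ℝ) 1, ∃ M : ℝ, ∀ z ∈ Set.Ioo (0:ℝ) d, |Pgamma r γ z| ≤ M) ↔
    ((∀ j ≤ r, γ j = 0) ∨
      ∃ j0 ≤ r, γ j0 ≠ 0 ∧ (∀ i < j0, γ i = 0) ∧
        ((j0 = 0 ∧ 0 < γ 0) ∨ (1 ≤ j0 ∧ γ j0 < 0))) := by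
  classical
  rw [exists_Ioo_abs_le_iff_isBoundedUnder]
  constructor
  · intro hbdd
    by_cases hzero : ∀ j ≤ r, γ j = 0
    · exact Or.inl hzero
    push Not at hzero
    obtain ⟨hj₀, hγ⟩ := Nat.find_spec hzero
    have hlow : ∀ i < Nat.find hzero, γ i = 0 := fun i hi =>
      by_contra fun hne => Nat.find_min hzero hi ⟨hi.le.trans hj₀, hne⟩
    exact Or.inr ⟨_, hj₀, hγ, hlow, (isBoundedUnder_abs_Pgamma_iff_of_leading hj₀ hγ hlow).1 hbdd⟩
  · rintro (hzero | ⟨j₀, hj₀, hγ, hlow, hsign⟩)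
    · simpa [Pgamma_of_forall_eq_zero hzero] using isBoundedUnder_const
    · exact (isBoundedUnder_abs_Pgamma_iff_of_leading hj₀ hγ hlow).2 hsign
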